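/- arXiv:1510.04560 — 5 statements merged into one kernel-verified Lean document; each statement's English description precedes it below -/
import Mathlib

section
/- Let X be a complex Banach space which does not contain a copy of c₀, let T be a bounded linear operator on X satisfying the unconditional Ritt condition, and let P be a bounded linear projection on X (P² = P) with range Fix(T) = ker(I − T) and kernel equal to the closure of the range of I − T. If the range of I − T is closed, then there exist constants C > 0 and r ∈ [0, 1) such that ‖T^n − P‖ ≤ C rⁿ for all n ≥ 0. -/
open Filter Topology

/-- The unconditional Ritt condition for a bounded operator on a complex Banach space. -/
def UncondRitt {X : Type*} [NormedAddCommGroup X] [NormedSpace ℂ X]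
    (T : X →L[ℂ] X) : Prop :=
  ∃ C : ℝ, 0 < C ∧ ∀ (n : ℕ) (a : ℕ → ℂ),
    ‖∑ k ∈ Finset.range (n + 1), a k • (T ^ k * (1 - T))‖ ≤
      C * (Finset.range (n + 1)).sup' Finset.nonempty_range_add_one (fun k => ‖a k‖)

/-- A complex Banach space `X` contains a copy of `c₀` if some closed subspace of `X`
is isomorphic, via a continuous linear equivalence, to the space `c₀ = C₀(ℕ, ℂ)` of
complex sequences tending to zero with the supremum norm. -/
def ContainsCopyOfC0 (X : Type*) [NormedAddCommGroup X] [NormedSpace ℂ X] : Prop :=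
  ∃ Y : Submodule ℂ X, IsClosed (Y : Set X) ∧
    Nonempty (Y ≃L[ℂ] ZeroAtInftyContinuousMap ℕ ℂ)

/-!
For `|z| > 1`, the unconditional Ritt condition applied to the coefficients `z⁻ᵏ⁻¹` bounds
`(z - T)⁻¹ (1 - T)` by `C`, which gives the Ritt resolvent estimate
`|z - 1| ‖(z - T)⁻¹‖ ≤ 1 + C`. This keeps the resolvent bounded as `z` approaches any point of the
unit circle other than `1`, so `σ(T)` lies in the open unit disc together with `1`.
Since `Ran(1 - T)` is closed, `X = Fix(T) ⊕ Ran(1 - T)` and `1 - T + P` is invertible, so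
`1 ∉ σ(T - P)`; for `z ≠ 0, 1` one has `z - (T - P) = (z - T)(1 + (z - 1)⁻¹ P)`.
Hence `T - P` has spectral radius `< 1`, and Gelfand's formula gives
`‖T ^ n - P‖ = ‖(T - P) ^ n‖ = O(rⁿ)` for some `r < 1`.
-/

open Asymptotics Finset
open scoped NNReal ENNReal

section BanachAlgebra

variable {A : Type*} [NormedRing A] [NormedAlgebra ℂ A]

theorem exists_isBigO_pow_of_forall_norm_lt_one [CompleteSpace A] {a : A}
    (ha : ∀ z ∈ spectrum ℂ a, ‖z‖ < 1) :
    ∃ r : ℝ, 0 < r ∧ r < 1 ∧ (fun n : ℕ => a ^ n) =O[atTop] (fun n => r ^ n) := by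
  have hrad : spectralRadius ℂ a < 1 := by
    rcases subsingleton_or_nontrivial A with _ | _
    · simp [spectrum.SpectralRadius.of_subsingleton]
    · exact_mod_cast spectrum.spectralRadius_lt_of_forall_lt a fun z hz => by
        exact_mod_cast ha z hz
  obtain ⟨r, hr_rad, hr_one⟩ := ENNReal.lt_iff_exists_nnreal_btwn.mp hrad
  have hr : (0 : ℝ≥0∞) < r := (zero_le).trans_lt hr_rad
  refine ⟨r, by exact_mod_cast hr, by exact_mod_cast hr_one, IsBigO.of_bound 1 ?_⟩
  have hgelfand := spectrum.pow_nnnorm_pow_one_div_tendsto_nhds_spectralRadius a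
  filter_upwards [hgelfand.eventually_lt_const hr_rad, eventually_ne_atTop 0] with n hn hn0
  rw [one_div, ENNReal.rpow_inv_lt_iff (by positivity), ENNReal.rpow_natCast, ← ENNReal.coe_pow,
    ENNReal.coe_lt_coe, ← NNReal.coe_lt_coe, coe_nnnorm, NNReal.coe_pow] at hn
  simpa [abs_of_nonneg] using hn.le

theorem isUnit_algebraMap_sub_of_norm_mul_lt_one [CompleteSpace A] {a R : A} {μ z : ℂ}
    (hR : R * (algebraMap ℂ A μ - a) = 1) (hR' : (algebraMap ℂ A μ - a) * R = 1)
    (hz : ‖z - μ‖ * ‖R‖ < 1) : IsUnit (algebraMap ℂ A z - a) := by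
  have hsmall : ‖(μ - z) • R‖ < 1 := (norm_smul_le _ _).trans_lt (by rwa [norm_sub_rev])
  have hfactor : algebraMap ℂ A z - a = (algebraMap ℂ A μ - a) * (1 - (μ - z) • R) := by
    rw [mul_sub, mul_one, mul_smul_comm, hR', Algebra.algebraMap_eq_smul_one,
      Algebra.algebraMap_eq_smul_one, sub_smul]
    abel
  rw [hfactor]
  exact IsUnit.mul ⟨⟨_, R, hR', hR⟩, rfl⟩ (Units.oneSub _ hsmall).isUnit

-- `UncondRitt T` unfolds to `∃ C, 0 < C ∧ UncondRittWith T C`.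
def UncondRittWith (t : A) (C : ℝ) : Prop :=
  ∀ (n : ℕ) (a : ℕ → ℂ),
    ‖∑ k ∈ range (n + 1), a k • (t ^ k * (1 - t))‖ ≤
      C * (range (n + 1)).sup' nonempty_range_add_one (fun k => ‖a k‖)

namespace UncondRittWith

variable {t : A} {C : ℝ}

theorem nonneg (h : UncondRittWith t C) : 0 ≤ C := by
  simpa using (norm_nonneg _).trans (h 0 1)

theorem norm_sum_le (h : UncondRittWith t C) {a : ℕ → ℂ} (ha : ∀ k, ‖a k‖ ≤ 1) (n : ℕ) :
    ‖∑ k ∈ range n, a k • (t ^ k * (1 - t))‖ ≤ C := by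
  cases n with
  | zero => simpa using h.nonneg
  | succ n => exact (h n a).trans (mul_le_of_le_one_right h.nonneg (sup'_le _ _ fun k _ => ha k))

theorem norm_pow_le (h : UncondRittWith t C) (n : ℕ) : ‖t ^ n‖ ≤ ‖(1 : A)‖ + C := by
  have hsum : ‖1 - t ^ n‖ ≤ C := by
    simpa [← sum_mul, geom_sum_mul_neg] using h.norm_sum_le (a := 1) (fun _ => by simp) n
  calc ‖t ^ n‖ = ‖1 - (1 - t ^ n)‖ := by rw [sub_sub_cancel]
    _ ≤ ‖(1 : A)‖ + ‖1 - t ^ n‖ := norm_sub_le _ _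
    _ ≤ ‖(1 : A)‖ + C := by gcongr

theorem exists_inverse_of_one_lt_norm [CompleteSpace A] (h : UncondRittWith t C) {z : ℂ}
    (hz : 1 < ‖z‖) :
    ∃ R : A, R * (algebraMap ℂ A z - t) = 1 ∧ (algebraMap ℂ A z - t) * R = 1 ∧
      ‖z - 1‖ * ‖R‖ ≤ ‖(1 : A)‖ + C := by
  set w := z⁻¹
  have hw : ‖w‖ < 1 := by rw [norm_inv]; exact inv_lt_one_of_one_lt₀ hz
  have hzw : z * w = 1 := mul_inv_cancel₀ (norm_pos_iff.mp (one_pos.trans hz))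
  have hsum : Summable fun n => (w • t) ^ n := by
    refine .of_norm_bounded ((summable_geometric_of_lt_one (norm_nonneg w) hw).mul_left
      (‖(1 : A)‖ + C)) fun n => ?_
    rw [smul_pow]
    refine (norm_smul_le _ _).trans ?_
    rw [norm_pow, mul_comm]
    exact mul_le_mul_of_nonneg_right (h.norm_pow_le n) (by positivity)
  have hfactor : algebraMap ℂ A z - t = z • (1 - w • t) := by
    rw [smul_sub, smul_smul, hzw, one_smul, Algebra.algebraMap_eq_smul_one]
  set R := w • ∑' n, (w • t) ^ n with hRdef
  have hR : R * (algebraMap ℂ A z - t) = 1 := by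
    rw [hfactor, smul_mul_smul_comm, mul_comm, hzw, hsum.tsum_pow_mul_one_sub, one_smul]
  have hR' : (algebraMap ℂ A z - t) * R = 1 := by
    rw [hfactor, smul_mul_smul_comm, hzw, hsum.one_sub_mul_tsum_pow, one_smul]
  have hRt : HasSum (fun k => w ^ (k + 1) • (t ^ k * (1 - t))) (R * (1 - t)) := by
    have := (hsum.hasSum.mul_right (1 - t)).const_smul w
    rw [hRdef, smul_mul_assoc]
    simpa only [smul_pow, smul_mul_assoc, smul_smul, ← pow_succ'] using this
  have hRt_le : ‖R * (1 - t)‖ ≤ C :=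
    le_of_tendsto' hRt.tendsto_sum_nat.norm fun n =>
      h.norm_sum_le (fun k => by rw [norm_pow]; exact pow_le_one₀ (norm_nonneg _) hw.le) n
  have hdecomp : (z - 1) • R = 1 - R * (1 - t) := by
    have hsplit : algebraMap ℂ A z - t = (z - 1) • 1 + (1 - t) := by
      rw [Algebra.algebraMap_eq_smul_one, sub_smul, one_smul]; abel
    calc (z - 1) • R = R * ((z - 1) • 1 + (1 - t)) - R * (1 - t) := by
          rw [mul_add, mul_smul_comm, mul_one, add_sub_cancel_right]
      _ = 1 - R * (1 - t) := by rw [← hsplit, hR]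
  refine ⟨R, hR, hR', ?_⟩
  calc ‖z - 1‖ * ‖R‖ = ‖(z - 1) • R‖ := (norm_smul _ _).symm
    _ ≤ ‖(1 : A)‖ + ‖R * (1 - t)‖ := by rw [hdecomp]; exact norm_sub_le _ _
    _ ≤ ‖(1 : A)‖ + C := by gcongr

theorem mem_resolventSet_of_one_le_norm [CompleteSpace A] (h : UncondRittWith t C) {z : ℂ}
    (hz : 1 ≤ ‖z‖) (hz1 : z ≠ 1) : z ∈ resolventSet ℂ t := by
  set d := ‖z - 1‖
  set K := ‖(1 : A)‖ + C
  have hd : 0 < d := norm_pos_iff.mpr (sub_ne_zero.mpr hz1)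
  have hK : 0 ≤ K := add_nonneg (norm_nonneg _) h.nonneg
  -- `ε (K + 1) = d / 2` makes `ε ‖(μ - t)⁻¹‖ ≤ K / (K + 1) < 1` below
  set ε := d / 2 / (K + 1)
  have hε : 0 < ε := by positivity
  have hεK : ε * (K + 1) = d / 2 := div_mul_cancel₀ _ (by positivity)
  have hz0 : 0 < ‖z‖ := one_pos.trans_le hz
  -- approach `z` from outside the unit disc along the ray through `z`
  set μ : ℂ := ((1 + ε / ‖z‖ : ℝ) : ℂ) * z
  have hμ_norm : ‖μ‖ = ‖z‖ + ε := by
    rw [norm_mul, Complex.norm_real, Real.norm_of_nonneg (by positivity), add_mul,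
      div_mul_cancel₀ _ hz0.ne', one_mul]
  have hzμ : ‖z - μ‖ = ε := by
    have : z - μ = -((ε / ‖z‖ : ℝ) : ℂ) * z := by push_cast [μ]; ring
    rw [this, norm_mul, norm_neg, Complex.norm_real, Real.norm_of_nonneg (by positivity),
      div_mul_cancel₀ _ hz0.ne']
  have hμ : 1 < ‖μ‖ := by rw [hμ_norm]; linarith
  obtain ⟨R, hR, hR', hRK⟩ := h.exists_inverse_of_one_lt_norm hμ
  have hμ1 : d / 2 ≤ ‖μ - 1‖ := by
    have : d ≤ ‖z - μ‖ + ‖μ - 1‖ := by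
      simpa only [sub_add_sub_cancel] using norm_add_le (z - μ) (μ - 1)
    have : ε ≤ d / 2 := div_le_self (by positivity) (by linarith)
    linarith
  have hsmall : ‖z - μ‖ * ‖R‖ < 1 := by
    rw [hzμ]
    have : ε * ‖R‖ * (K + 1) ≤ K := by
      rw [mul_right_comm, hεK]
      exact (mul_le_mul_of_nonneg_right hμ1 (norm_nonneg R)).trans hRK
    exact lt_of_mul_lt_mul_right (by linarith : ε * ‖R‖ * (K + 1) < 1 * (K + 1)) (by positivity)
  exact spectrum.mem_resolventSet_iff.mpr (isUnit_algebraMap_sub_of_norm_mul_lt_one hR hR' hsmall)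

end UncondRittWith

end BanachAlgebra

section Idempotent

variable {𝕜 R : Type*} [Field 𝕜] [Ring R] [Algebra 𝕜 R] {t p : R}

theorem IsIdempotentElem.isUnit_one_add_smul (hp : IsIdempotentElem p) {c : 𝕜}
    (hc : 1 + c ≠ 0) : IsUnit (1 + c • p) := by
  have hmul : ∀ a b : 𝕜, (1 + a • p) * (1 + b • p) = 1 + (a + b + a * b) • p := fun a b => by
    rw [add_mul, mul_add, mul_add, one_mul, mul_one, one_mul, smul_mul_smul_comm, hp.eq,
      add_smul, add_smul]
    abel
  set b := -(c / (1 + c))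
  have hcb : c + b + c * b = 0 := by simp only [b]; field_simp; ring
  have hbc : b + c + b * c = 0 := by linear_combination hcb
  exact ⟨⟨1 + c • p, 1 + b • p, by rw [hmul, hcb, zero_smul, add_zero],
    by rw [hmul, hbc, zero_smul, add_zero]⟩, rfl⟩

theorem mem_resolventSet_sub_of_isIdempotentElem (hp : IsIdempotentElem p) (htp : t * p = p)
    {z : 𝕜} (hz0 : z ≠ 0) (hz1 : z ≠ 1) (hz : z ∈ resolventSet 𝕜 t) :
    z ∈ resolventSet 𝕜 (t - p) := by
  have hz1' : z - 1 ≠ 0 := sub_ne_zero.mpr hz1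
  -- `algebraMap z - t` acts on the range of `p` as multiplication by `z - 1`
  have hfactor : algebraMap 𝕜 R z - (t - p) =
      (algebraMap 𝕜 R z - t) * (1 + (z - 1)⁻¹ • p) := by
    rw [mul_add, mul_one, mul_smul_comm, sub_mul, htp, Algebra.algebraMap_eq_smul_one,
      smul_mul_assoc, one_mul, ← one_smul 𝕜 p, smul_smul, ← sub_smul, smul_smul,
      mul_one, inv_mul_cancel₀ hz1', one_smul]
    abel
  have hc : 1 + (z - 1)⁻¹ ≠ 0 := by
    rwa [← mul_ne_zero_iff_right hz1', add_mul, one_mul, inv_mul_cancel₀ hz1', sub_add_cancel]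
  rw [spectrum.mem_resolventSet_iff, hfactor]
  exact (spectrum.mem_resolventSet_iff.mp hz).mul (hp.isUnit_one_add_smul hc)

theorem sub_pow_succ_of_isIdempotentElem (hp : IsIdempotentElem p) (htp : t * p = p)
    (hpt : p * t = p) (n : ℕ) : (t - p) ^ (n + 1) = t ^ (n + 1) - p := by
  have hpow : ∀ k : ℕ, p * t ^ k = p := fun k => by
    induction k with
    | zero => rw [pow_zero, mul_one]
    | succ k ih => rw [pow_succ, ← mul_assoc, ih, hpt]
  induction n with
  | zero => rw [pow_one, pow_one]
  | succ n ih =>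
    rw [pow_succ', ih, sub_mul, mul_sub, mul_sub, ← pow_succ', htp, hpow, hp.eq]
    abel

end Idempotent

namespace ContinuousLinearMap

variable {X : Type*} [NormedAddCommGroup X] [NormedSpace ℂ X] {T P : X →L[ℂ] X}

theorem mul_eq_self_of_range_one_sub_le_ker
    (h : LinearMap.range ((1 - T : X →L[ℂ] X) : X →ₗ[ℂ] X) ≤ LinearMap.ker (P : X →ₗ[ℂ] X)) :
    P * T = P := by
  ext x
  have : P (x - T x) = 0 := h ⟨x, rfl⟩
  rwa [map_sub, sub_eq_zero, eq_comm] at this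

theorem mul_eq_self_of_range_le_ker_one_sub
    (h : LinearMap.range (P : X →ₗ[ℂ] X) ≤ LinearMap.ker ((1 - T : X →L[ℂ] X) : X →ₗ[ℂ] X)) :
    T * P = P := by
  ext x
  have : P x - T (P x) = 0 := h ⟨x, rfl⟩
  rwa [sub_eq_zero, eq_comm] at this

theorem isUnit_one_sub_add [CompleteSpace X] (hP : IsIdempotentElem P)
    (hrange : LinearMap.range (P : X →ₗ[ℂ] X) = LinearMap.ker ((1 - T : X →L[ℂ] X) : X →ₗ[ℂ] X))
    (hker : LinearMap.ker (P : X →ₗ[ℂ] X) = LinearMap.range ((1 - T : X →L[ℂ] X) : X →ₗ[ℂ] X)) :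
    IsUnit (1 - T + P) := by
  have hPT : ∀ x, P (T x) = P x := fun x =>
    congr($(mul_eq_self_of_range_one_sub_le_ker hker.ge) x)
  have hTP : ∀ x, T (P x) = P x := fun x =>
    congr($(mul_eq_self_of_range_le_ker_one_sub hrange.le) x)
  have hPP : ∀ x, P (P x) = P x := fun x => congr($hP.eq x)
  rw [isUnit_iff_bijective]
  constructor
  · rw [injective_iff_map_eq_zero]
    intro x hx
    simp only [add_apply, sub_apply, one_apply_eq_self] at hx
    have hPx : P x = 0 := by simpa [hPT, hPP] using congr(P $hx)
    have hfix : x ∈ LinearMap.range (P : X →ₗ[ℂ] X) := by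
      rw [hrange]
      simpa [hPx] using hx
    obtain ⟨y, rfl⟩ := hfix
    simpa [hPP] using hPx
  · intro y
    obtain ⟨w, hw⟩ : y - P y ∈ LinearMap.range ((1 - T : X →L[ℂ] X) : X →ₗ[ℂ] X) := by
      rw [← hker]
      simp [hPP]
    refine ⟨w - P w + P y, ?_⟩
    simp only [coe_coe, sub_apply, one_apply_eq_self] at hw
    simp only [add_apply, sub_apply, one_apply_eq_self, map_add, map_sub, hTP, hPP]
    rw [← sub_eq_zero, ← sub_eq_zero.mpr hw]
    abel

end ContinuousLinearMap

theorem UncondRittWith.norm_lt_one_of_mem_spectrum_sub {X : Type*} [NormedAddCommGroup X]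
    [NormedSpace ℂ X] [CompleteSpace X] {T P : X →L[ℂ] X} {C : ℝ} (h : UncondRittWith T C)
    (hP : IsIdempotentElem P)
    (hrange : LinearMap.range (P : X →ₗ[ℂ] X) = LinearMap.ker ((1 - T : X →L[ℂ] X) : X →ₗ[ℂ] X))
    (hker : LinearMap.ker (P : X →ₗ[ℂ] X) = LinearMap.range ((1 - T : X →L[ℂ] X) : X →ₗ[ℂ] X))
    {z : ℂ} (hz : z ∈ spectrum ℂ (T - P)) : ‖z‖ < 1 := by
  by_contra! hz_ge
  rcases eq_or_ne z 1 with rfl | hz1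
  · refine spectrum.mem_iff.mp hz ?_
    rw [map_one, sub_sub_eq_add_sub, add_sub_right_comm]
    exact ContinuousLinearMap.isUnit_one_sub_add hP hrange hker
  · have hz0 : z ≠ 0 := norm_pos_iff.mp (one_pos.trans_le hz_ge)
    exact hz <| mem_resolventSet_sub_of_isIdempotentElem hP
      (ContinuousLinearMap.mul_eq_self_of_range_le_ker_one_sub hrange.le) hz0 hz1
      (h.mem_resolventSet_of_one_le_norm hz_ge hz1)

theorem uncondRitt_closed_range_exponential_convergence_general
    {X : Type*} [NormedAddCommGroup X] [NormedSpace ℂ X] [CompleteSpace X]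
    (T : X →L[ℂ] X) (hT : UncondRitt T)
    (P : X →L[ℂ] X) (hP : P.comp P = P)
    (hrange : LinearMap.range (P : X →ₗ[ℂ] X) = LinearMap.ker ((1 - T : X →L[ℂ] X) : X →ₗ[ℂ] X))
    (hker : LinearMap.ker (P : X →ₗ[ℂ] X) = (LinearMap.range ((1 - T : X →L[ℂ] X) : X →ₗ[ℂ] X)).topologicalClosure)
    (hclosed : IsClosed ((LinearMap.range ((1 - T : X →L[ℂ] X) : X →ₗ[ℂ] X) : Submodule ℂ X) : Set X)) :
    ∃ C : ℝ, 0 < C ∧ ∃ r : ℝ, 0 ≤ r ∧ r < 1 ∧ ∀ n : ℕ, ‖T ^ n - P‖ ≤ C * r ^ n := by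
  obtain ⟨C, -, hC⟩ := hT
  have hP' : IsIdempotentElem P := hP
  have hker' := hker.trans hclosed.submodule_topologicalClosure_eq
  obtain ⟨r, hr0, hr1, hdecay⟩ := exists_isBigO_pow_of_forall_norm_lt_one fun z hz =>
    UncondRittWith.norm_lt_one_of_mem_spectrum_sub hC hP' hrange hker' hz
  have hpow : ∀ᶠ n in atTop, (T - P) ^ n = T ^ n - P := by
    filter_upwards [eventually_ne_atTop 0] with n hn
    obtain ⟨m, rfl⟩ := Nat.exists_eq_succ_of_ne_zero hn
    exact sub_pow_succ_of_isIdempotentElem hP'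
      (ContinuousLinearMap.mul_eq_self_of_range_le_ker_one_sub hrange.le)
      (ContinuousLinearMap.mul_eq_self_of_range_one_sub_le_ker hker'.ge) m
  obtain ⟨K, hK, hbound⟩ := bound_of_isBigO_nat_atTop (hdecay.congr' hpow EventuallyEq.rfl)
  refine ⟨K, hK, r, hr0.le, hr1, fun n => ?_⟩
  simpa [abs_of_pos hr0] using hbound (pow_ne_zero n hr0.ne')

/-- **Exponentially fast convergence when the range is closed.**
If `X` contains no copy of `c₀`, `T` satisfies the unconditional Ritt condition,
`P` is the bounded projection onto `Fix(T)` along the closure of `Ran(I - T)`, and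
`Ran(I - T)` is closed, then `‖T^n - P‖ ≤ C rⁿ` for some `C > 0` and `r ∈ [0, 1)`. -/
theorem uncondRitt_closed_range_exponential_convergence
    {X : Type*} [NormedAddCommGroup X] [NormedSpace ℂ X] [CompleteSpace X]
    (T : X →L[ℂ] X) (hc0 : ¬ ContainsCopyOfC0 X) (hT : UncondRitt T)
    (P : X →L[ℂ] X) (hP : P.comp P = P)
    (hrange : LinearMap.range (P : X →ₗ[ℂ] X) = LinearMap.ker ((1 - T : X →L[ℂ] X) : X →ₗ[ℂ] X))
    (hker : LinearMap.ker (P : X →ₗ[ℂ] X) = (LinearMap.range ((1 - T : X →L[ℂ] X) : X →ₗ[ℂ] X)).topologicalClosure)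
    (hclosed : IsClosed ((LinearMap.range ((1 - T : X →L[ℂ] X) : X →ₗ[ℂ] X) : Submodule ℂ X) : Set X)) :
    ∃ C : ℝ, 0 < C ∧ ∃ r : ℝ, 0 ≤ r ∧ r < 1 ∧ ∀ n : ℕ, ‖T ^ n - P‖ ≤ C * r ^ n :=
  uncondRitt_closed_range_exponential_convergence_general T hT P hP hrange hker hclosed
end

section
/- Let X be a complex Banach space which does not contain a copy of c₀, let T be a bounded linear operator on X satisfying the unconditional Ritt condition, and let P be a bounded linear projection on X (P² = P) with range Fix(T) = ker(I − T) and kernel equal to the closure of the range of I − T. Then for every real number α > 0 there exists a dense linear subspace X_α of X such that for all x ∈ X_α one has n^α · ‖T^n x − Px‖ → 0 as n → ∞. -/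
open Filter Topology

/-!
The unconditional Ritt condition bounds `‖∑ₖ₌₀ⁿ zᵏ Tᵏ (1 - T)‖` uniformly for `|z| = 1`. Hence `T`
is power bounded, and extracting the coefficient of `zⁿ` in the square of this polynomial by
averaging over roots of unity shows that `(n + 1) ‖Tⁿ (1 - T)²‖` is bounded. Splitting `n` in
halves bootstraps this to `‖Tⁿ (1 - T)^(2b)‖ = O(n⁻ᵇ)`. Take `X_α = Ran P + Ran (1 - T)^(2b)` with
`b > α`: for `x` in it, `Tⁿ x - P x = Tⁿ (1 - T)^(2b) y`. It is dense because `x - P x` lies in the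
closure of `Ran (1 - T)`, and power boundedness makes `1 - T` an operator-norm limit of
`(1 - T)² Vₙ` (with `Vₙ` the Cesàro means of the partial geometric sums), so that `Ran (1 - T)` lies
in the closure of `Ran (1 - T)^m` for every `m ≥ 1`.
-/

section
open Finset

theorem Commute.pow_add_mul_pow_add {R : Type*} [Monoid R] {x y : R} (h : Commute x y)
    (p q r s : ℕ) : x ^ (p + q) * y ^ (r + s) = x ^ p * y ^ r * (x ^ q * y ^ s) := by
  simp only [pow_add, mul_assoc]
  rw [← mul_assoc (x ^ q), (h.pow_pow q r).eq, mul_assoc]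

theorem IsPrimitiveRoot.geom_sum_pow_eq_ite {K : Type*} [Field K] {ω : K} {N : ℕ}
    (hω : IsPrimitiveRoot ω N) (e : ℕ) :
    ∑ j ∈ range N, (ω ^ e) ^ j = if N ∣ e then (N : K) else 0 := by
  split_ifs with he
  · simp [(hω.pow_eq_one_iff_dvd e).mpr he]
  · have hne : ω ^ e ≠ 1 := fun h => he ((hω.pow_eq_one_iff_dvd e).mp h)
    rw [geom_sum_eq hne, pow_right_comm, hω.pow_eq_one, one_pow, sub_self, zero_div]

theorem norm_sum_filter_le_of_forall_norm_eq_one {E ι : Type*} [NormedAddCommGroup E]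
    [NormedSpace ℂ E] (s : Finset ι) (f : ι → ℕ) (c : ι → E) {N : ℕ} (hf : ∀ i ∈ s, f i < N)
    {B : ℝ} (hB : ∀ z : ℂ, ‖z‖ = 1 → ‖∑ i ∈ s, z ^ f i • c i‖ ≤ B) {d : ℕ} (hd : d < N) :
    ‖∑ i ∈ s with f i = d, c i‖ ≤ B := by
  have hN : N ≠ 0 := by omega
  set ω : ℂ := Complex.exp (2 * Real.pi * Complex.I / N)
  have hω : IsPrimitiveRoot ω N := Complex.isPrimitiveRoot_exp N hN
  have hω_norm : ‖ω‖ = 1 := Complex.norm_eq_one_of_pow_eq_one hω.pow_eq_one hN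
  -- `z ^ (N - d + f i)` averages to zero over the `N`-th roots of unity unless `f i = d`
  have hdvd : ∀ i ∈ s, N ∣ N - d + f i ↔ f i = d := fun i hi => by
    have := hf i hi
    refine ⟨fun h => ?_, fun h => by rw [h, Nat.sub_add_cancel hd.le]⟩
    have := Nat.eq_of_dvd_of_lt_two_mul (by omega) h (by omega)
    omega
  have key : ∑ j ∈ range N, (ω ^ j) ^ (N - d) • ∑ i ∈ s, (ω ^ j) ^ f i • c i =
      (N : ℂ) • ∑ i ∈ s with f i = d, c i := by
    simp_rw [smul_sum, smul_smul, ← pow_add, ← pow_mul, mul_comm _ (_ + _), pow_mul]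
    rw [sum_comm, sum_filter]
    refine sum_congr rfl fun i hi => ?_
    rw [← sum_smul, hω.geom_sum_pow_eq_ite, if_congr (hdvd i hi) rfl rfl, ite_smul,
      zero_smul]
  have hbound : ‖∑ j ∈ range N, (ω ^ j) ^ (N - d) • ∑ i ∈ s, (ω ^ j) ^ f i • c i‖ ≤ N * B := by
    refine (norm_sum_le _ _).trans ?_
    refine (sum_le_sum fun j _ => ?_).trans (by rw [sum_const, card_range, nsmul_eq_mul])
    rw [norm_smul, norm_pow, norm_pow, hω_norm, one_pow, one_pow, one_mul]
    exact hB _ (by rw [norm_pow, hω_norm, one_pow])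
  rw [key, norm_smul, Complex.norm_natCast] at hbound
  exact le_of_mul_le_mul_left hbound (by positivity)

theorem exists_pow_mul_norm_pow_mul_one_sub_pow_le {R : Type*} [NormedRing R] {a : R} {M K : ℝ}
    (hM : ∀ n, ‖a ^ n‖ ≤ M)
    (hK : ∀ n : ℕ, ((n : ℝ) + 1) * ‖a ^ n * (1 - a) ^ 2‖ ≤ K) (b : ℕ) :
    ∃ D, ∀ n : ℕ, ((n : ℝ) + 1) ^ b * ‖a ^ n * (1 - a) ^ (2 * b)‖ ≤ D := by
  induction b with
  | zero => exact ⟨M, fun n => by simpa using hM n⟩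
  | succ b ih =>
    obtain ⟨D, hD⟩ := ih
    refine ⟨2 ^ (b + 1) * (D * K), fun n => ?_⟩
    -- `a ^ n (1 - a) ^ (2b + 2) = a ^ p (1 - a) ^ (2b) * a ^ q (1 - a) ^ 2` with `p, q ≈ n / 2`
    obtain ⟨p, q, rfl, hp, hq⟩ : ∃ p q, n = p + q ∧ (n : ℝ) + 1 ≤ 2 * (p + 1) ∧
        (n : ℝ) + 1 ≤ 2 * (q + 1) :=
      ⟨n / 2, n - n / 2, by omega, by norm_cast; omega, by norm_cast; omega⟩
    have hsplit := ((Commute.one_left a).sub_left (Commute.refl a)).symm.pow_add_mul_pow_add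
      p q (2 * b) 2
    rw [← mul_add_one] at hsplit
    calc ((↑(p + q) : ℝ) + 1) ^ (b + 1) * ‖a ^ (p + q) * (1 - a) ^ (2 * (b + 1))‖
        ≤ (2 * (p + 1)) ^ b * (2 * (q + 1)) *
            (‖a ^ p * (1 - a) ^ (2 * b)‖ * ‖a ^ q * (1 - a) ^ 2‖) := by
          rw [hsplit, pow_succ]
          gcongr
          exact norm_mul_le _ _
      _ = 2 ^ (b + 1) * ((((p : ℝ) + 1) ^ b * ‖a ^ p * (1 - a) ^ (2 * b)‖) *
            (((q : ℝ) + 1) * ‖a ^ q * (1 - a) ^ 2‖)) := by rw [mul_pow]; ring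
      _ ≤ 2 ^ (b + 1) * (D * K) := by
          gcongr
          · exact (by positivity : (0 : ℝ) ≤ _).trans (hD p)
          · exact hD p
          · exact hK q

theorem tendsto_one_sub_sq_mul_smul_sum_geom_sum {𝕜 R : Type*} [RCLike 𝕜] [NormedRing R]
    [NormedAlgebra 𝕜 R] {a : R} {M : ℝ} (hM : ∀ n, ‖a ^ n‖ ≤ M) :
    Tendsto (fun N : ℕ => (1 - a) ^ 2 * ((N : 𝕜)⁻¹ • ∑ k ∈ range N, ∑ i ∈ range k, a ^ i))
      atTop (𝓝 (1 - a)) := by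
  have hdiff : ∀ N : ℕ, N ≠ 0 → (1 - a) ^ 2 * ((N : 𝕜)⁻¹ • ∑ k ∈ range N, ∑ i ∈ range k, a ^ i)
      = (1 - a) - (N : 𝕜)⁻¹ • (1 - a ^ N) := by
    intro N hN
    rw [mul_smul_comm, sq, mul_assoc, mul_sum]
    simp_rw [mul_neg_geom_sum]
    rw [sum_sub_distrib, sum_const, card_range, mul_sub, mul_neg_geom_sum, mul_smul_one,
      smul_sub, ← Nat.cast_smul_eq_nsmul 𝕜, smul_smul, inv_mul_cancel₀ (by exact_mod_cast hN),
      one_smul]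
  have hsmall : Tendsto (fun N : ℕ => (N : 𝕜)⁻¹ • (1 - a ^ N)) atTop (𝓝 0) := by
    refine squeeze_zero_norm (fun N => ?_)
      (tendsto_const_div_atTop_nhds_zero_nat (‖(1 : R)‖ + M))
    rw [norm_smul, norm_inv, RCLike.norm_natCast, ← div_eq_inv_mul]
    gcongr
    exact (norm_sub_le _ _).trans (add_le_add_right (hM N) _)
  simpa using (tendsto_const_nhds.sub hsmall).congr'
    ((eventually_ne_atTop 0).mono fun N hN => (hdiff N hN).symm)

section
variable {𝕜 X : Type*} [RCLike 𝕜] [NormedAddCommGroup X] [NormedSpace 𝕜 X]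

theorem range_one_sub_pow_le_topologicalClosure_range_one_sub_pow_succ {T : X →L[𝕜] X} {M : ℝ}
    (hM : ∀ n, ‖T ^ n‖ ≤ M) {m : ℕ} (hm : m ≠ 0) :
    LinearMap.range (((1 - T) ^ m : X →L[𝕜] X) : X →ₗ[𝕜] X) ≤
      (LinearMap.range (((1 - T) ^ (m + 1) : X →L[𝕜] X) : X →ₗ[𝕜] X)).topologicalClosure := by
  obtain ⟨k, rfl⟩ : ∃ k, m = k + 1 := ⟨m - 1, by omega⟩
  rintro _ ⟨z, rfl⟩
  have hlim := ((ContinuousLinearMap.apply 𝕜 X z).continuous.comp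
    (continuous_const_mul ((1 - T) ^ k))).tendsto _ |>.comp
    (tendsto_one_sub_sq_mul_smul_sum_geom_sum (𝕜 := 𝕜) hM)
  rw [← SetLike.mem_coe, Submodule.topologicalClosure_coe, pow_succ (1 - T) k]
  refine mem_closure_of_tendsto hlim (Eventually.of_forall fun N =>
    ⟨((N : 𝕜)⁻¹ • ∑ j ∈ range N, ∑ i ∈ range j, T ^ i) z, ?_⟩)
  simp only [Function.comp_apply, ContinuousLinearMap.apply_apply, ContinuousLinearMap.coe_coe,
    ← mul_apply_eq_comp, ← mul_assoc, ← pow_add]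

theorem range_one_sub_le_topologicalClosure_range_one_sub_pow {T : X →L[𝕜] X} {M : ℝ}
    (hM : ∀ n, ‖T ^ n‖ ≤ M) {m : ℕ} (hm : m ≠ 0) :
    LinearMap.range ((1 - T : X →L[𝕜] X) : X →ₗ[𝕜] X) ≤
      (LinearMap.range (((1 - T) ^ m : X →L[𝕜] X) : X →ₗ[𝕜] X)).topologicalClosure := by
  obtain ⟨k, rfl⟩ : ∃ k, m = k + 1 := ⟨m - 1, by omega⟩
  clear hm
  induction k with
  | zero => simpa using Submodule.le_topologicalClosure _
  | succ k ih =>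
    exact ih.trans (Submodule.topologicalClosure_minimal _
      (range_one_sub_pow_le_topologicalClosure_range_one_sub_pow_succ hM (by omega))
      (Submodule.isClosed_topologicalClosure _))

end

theorem tendsto_rpow_mul_of_pow_succ_mul_le {f : ℕ → ℝ} (hf : ∀ n, 0 ≤ f n) {α : ℝ}
    (hα : 0 ≤ α) {b : ℕ} (hb : α ≤ b) {D : ℝ} (hD : ∀ n : ℕ, ((n : ℝ) + 1) ^ (b + 1) * f n ≤ D) :
    Tendsto (fun n : ℕ => (n : ℝ) ^ α * f n) atTop (𝓝 0) := by
  refine squeeze_zero (fun n => mul_nonneg (by positivity) (hf n)) (fun n => ?_)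
    (tendsto_const_div_atTop_nhds_zero_nat D |>.comp (tendsto_add_atTop_nat 1))
  have hn : (1 : ℝ) ≤ n + 1 := by simp
  have hpow : (n : ℝ) ^ α ≤ ((n : ℝ) + 1) ^ b := calc
    (n : ℝ) ^ α ≤ ((n : ℝ) + 1) ^ α := by gcongr; simp
    _ ≤ ((n : ℝ) + 1) ^ (b : ℝ) := Real.rpow_le_rpow_of_exponent_le hn hb
    _ = ((n : ℝ) + 1) ^ b := Real.rpow_natCast _ b
  rw [Function.comp_apply, Nat.cast_add_one, le_div_iff₀ (by positivity)]
  calc (n : ℝ) ^ α * f n * (n + 1) ≤ ((n : ℝ) + 1) ^ b * f n * (n + 1) := by gcongr; exact hf n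
    _ = ((n : ℝ) + 1) ^ (b + 1) * f n := by ring
    _ ≤ D := hD n

theorem dense_range_sup_of_ker_le_topologicalClosure {R M : Type*} [Ring R]
    [AddCommGroup M] [TopologicalSpace M] [Module R M] [ContinuousAdd M]
    [ContinuousConstSMul R M] {P : M →L[R] M} (hP : P.comp P = P) {W : Submodule R M}
    (hW : LinearMap.ker (P : M →ₗ[R] M) ≤ W.topologicalClosure) :
    Dense ((LinearMap.range (P : M →ₗ[R] M) ⊔ W : Submodule R M) : Set M) := by
  have hP' : IsIdempotentElem (P : M →ₗ[R] M) := congr_arg ContinuousLinearMap.toLinearMap hP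
  rw [Submodule.dense_iff_topologicalClosure_eq_top, eq_top_iff,
    ← (LinearMap.IsIdempotentElem.isCompl hP').sup_eq_top]
  exact sup_le (le_sup_left.trans (Submodule.le_topologicalClosure _))
    (hW.trans (Submodule.topologicalClosure_mono le_sup_right))

theorem exists_forall_pow_apply_sub_eq_of_mem_range_sup {R M : Type*} [Ring R] [AddCommGroup M]
    [TopologicalSpace M] [IsTopologicalAddGroup M] [Module R M] {T P : M →L[R] M}
    (hP : P.comp P = P)
    (hrange : LinearMap.range (P : M →ₗ[R] M) ≤ LinearMap.ker ((1 - T : M →L[R] M) : M →ₗ[R] M))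
    (hker : LinearMap.range ((1 - T : M →L[R] M) : M →ₗ[R] M) ≤ LinearMap.ker (P : M →ₗ[R] M))
    {m : ℕ} (hm : m ≠ 0) {x : M}
    (hx : x ∈ LinearMap.range (P : M →ₗ[R] M) ⊔
      LinearMap.range (((1 - T) ^ m : M →L[R] M) : M →ₗ[R] M)) :
    ∃ y, ∀ n : ℕ, (T ^ n) x - P x = (T ^ n * (1 - T) ^ m) y := by
  obtain ⟨_, ⟨w, rfl⟩, _, ⟨y, rfl⟩, rfl⟩ := Submodule.mem_sup.mp hx
  obtain ⟨k, rfl⟩ : ∃ k, m = k + 1 := ⟨m - 1, by omega⟩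
  have hfix : T (P w) = P w := (sub_eq_zero.mp (by simpa using hrange ⟨w, rfl⟩)).symm
  have hPP : P (P w) = P w := congr($hP w)
  have hPy : P (((1 - T) ^ (k + 1)) y) = 0 := by
    refine LinearMap.mem_ker.mp (hker ⟨((1 - T) ^ k) y, ?_⟩)
    simp [pow_succ', mul_apply_eq_comp]
  refine ⟨y, fun n => ?_⟩
  have hfixn : (T ^ n) (P w) = P w := by
    rw [FunLike.coe_pow_eq_iterate]
    exact Function.IsFixedPt.iterate hfix n
  simp only [ContinuousLinearMap.coe_coe, map_add, hPP, hPy, hfixn, mul_apply_eq_comp]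
  abel

namespace UncondRitt

variable {X : Type*} [NormedAddCommGroup X] [NormedSpace ℂ X] {T : X →L[ℂ] X}

theorem exists_norm_sum_le (hT : UncondRitt T) :
    ∃ C, 0 ≤ C ∧ ∀ (n : ℕ) (a : ℕ → ℂ), (∀ k, ‖a k‖ ≤ 1) →
      ‖∑ k ∈ range (n + 1), a k • (T ^ k * (1 - T))‖ ≤ C := by
  obtain ⟨C, hC, h⟩ := hT
  refine ⟨C, hC.le, fun n a ha => (h n a).trans ?_⟩
  exact mul_le_of_le_one_right hC.le (sup'_le _ _ fun k _ => ha k)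

theorem exists_norm_pow_le (hT : UncondRitt T) : ∃ M, ∀ n, ‖T ^ n‖ ≤ M := by
  obtain ⟨C, hC0, hC⟩ := hT.exists_norm_sum_le
  refine ⟨‖(1 : X →L[ℂ] X)‖ + C, fun n => ?_⟩
  have hsub : ‖1 - T ^ n‖ ≤ C := by
    cases n with
    | zero => simpa using hC0
    | succ k =>
      rw [← geom_sum_mul_neg, sum_mul]
      simpa using hC k (fun _ => 1) (by simp)
  calc ‖T ^ n‖ = ‖1 - (1 - T ^ n)‖ := by rw [sub_sub_cancel]
    _ ≤ ‖(1 : X →L[ℂ] X)‖ + C := (norm_sub_le _ _).trans (add_le_add_right hsub _)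

theorem exists_mul_norm_pow_mul_sq_le (hT : UncondRitt T) :
    ∃ K, ∀ n : ℕ, ((n : ℝ) + 1) * ‖T ^ n * (1 - T) ^ 2‖ ≤ K := by
  obtain ⟨C, -, hC⟩ := hT.exists_norm_sum_le
  refine ⟨C ^ 2, fun n => ?_⟩
  set A : ℕ → (X →L[ℂ] X) := fun k => T ^ k * (1 - T)
  have hA : ∀ k l, A k * A l = T ^ (k + l) * (1 - T) ^ 2 := fun k l => by
    simpa using (((Commute.one_left T).sub_left (Commute.refl T)).symm.pow_add_mul_pow_add
      k l 1 1).symm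
  -- the coefficient of `z ^ n` in `(∑ k ≤ n, z ^ k A k) ^ 2` is `(n + 1) T ^ n (1 - T) ^ 2`
  have hsq : ∀ z : ℂ, ‖z‖ = 1 →
      ‖∑ p ∈ range (n + 1) ×ˢ range (n + 1), z ^ (p.1 + p.2) • (A p.1 * A p.2)‖ ≤ C ^ 2 := by
    intro z hz
    have hS : ‖∑ k ∈ range (n + 1), z ^ k • A k‖ ≤ C := hC n (fun k => z ^ k) (by simp [hz])
    simp_rw [sum_product, pow_add, ← smul_mul_smul_comm, ← sum_mul_sum]
    exact (norm_mul_le _ _).trans ((mul_self_le_mul_self (norm_nonneg _) hS).trans_eq (sq C).symm)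
  have hfiber : ∑ p ∈ range (n + 1) ×ˢ range (n + 1) with p.1 + p.2 = n, A p.1 * A p.2 =
      (n + 1 : ℕ) • (T ^ n * (1 - T) ^ 2) := by
    rw [show {p ∈ range (n + 1) ×ˢ range (n + 1) | p.1 + p.2 = n} = antidiagonal n by
      ext; simp; omega]
    rw [sum_congr rfl (fun p hp => by rw [hA, mem_antidiagonal.mp hp]), sum_const,
      Nat.card_antidiagonal]
  have := norm_sum_filter_le_of_forall_norm_eq_one _ (fun p : ℕ × ℕ => p.1 + p.2) _
    (N := 2 * n + 1) (by simp; omega) hsq (d := n) (by omega)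
  rwa [hfiber, ← Nat.cast_smul_eq_nsmul ℂ, norm_smul, Complex.norm_natCast, Nat.cast_add_one]
    at this

end UncondRitt

end

theorem uncondRitt_polynomial_rates_on_dense_subspace_general
    {X : Type*} [NormedAddCommGroup X] [NormedSpace ℂ X]
    (T : X →L[ℂ] X) (hT : UncondRitt T)
    (P : X →L[ℂ] X) (hP : P.comp P = P)
    (hrange : LinearMap.range (P : X →ₗ[ℂ] X) = LinearMap.ker ((1 - T : X →L[ℂ] X) : X →ₗ[ℂ] X))
    (hker : LinearMap.ker (P : X →ₗ[ℂ] X) = (LinearMap.range ((1 - T : X →L[ℂ] X) : X →ₗ[ℂ] X)).topologicalClosure) :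
    ∀ α : ℝ, 0 < α → ∃ Xα : Submodule ℂ X, Dense (Xα : Set X) ∧
      ∀ x ∈ Xα, Tendsto (fun n : ℕ => (n : ℝ) ^ α * ‖(T ^ n) x - P x‖) atTop (𝓝 0) := by
  intro α hα
  obtain ⟨M, hM⟩ := hT.exists_norm_pow_le
  obtain ⟨K, hK⟩ := hT.exists_mul_norm_pow_mul_sq_le
  obtain ⟨D, hD⟩ := exists_pow_mul_norm_pow_mul_one_sub_pow_le hM hK (⌈α⌉₊ + 1)
  have hm : 2 * (⌈α⌉₊ + 1) ≠ 0 := by omega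
  refine ⟨LinearMap.range (P : X →ₗ[ℂ] X) ⊔
    LinearMap.range (((1 - T) ^ (2 * (⌈α⌉₊ + 1)) : X →L[ℂ] X) : X →ₗ[ℂ] X),
    dense_range_sup_of_ker_le_topologicalClosure hP (hker.trans_le ?_), fun x hx => ?_⟩
  · exact Submodule.topologicalClosure_minimal _
      (range_one_sub_le_topologicalClosure_range_one_sub_pow hM hm)
      (Submodule.isClosed_topologicalClosure _)
  obtain ⟨y, hy⟩ := exists_forall_pow_apply_sub_eq_of_mem_range_sup hP hrange.le
    (hker ▸ Submodule.le_topologicalClosure _) hm hx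
  refine tendsto_rpow_mul_of_pow_succ_mul_le (fun n => norm_nonneg _) hα.le (Nat.le_ceil α)
    (D := D * ‖y‖) fun n => ?_
  calc _ ≤ ((n : ℝ) + 1) ^ (⌈α⌉₊ + 1) * (‖T ^ n * (1 - T) ^ (2 * (⌈α⌉₊ + 1))‖ * ‖y‖) := by
        rw [hy]; gcongr; exact ContinuousLinearMap.le_opNorm _ _
    _ ≤ D * ‖y‖ := by rw [← mul_assoc]; gcongr; exact hD n

/-- **Polynomially fast convergence on dense subspaces.**
If `X` contains no copy of `c₀`, `T` satisfies the unconditional Ritt condition and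
`P` is the bounded projection onto `Fix(T)` along the closure of `Ran(I - T)`, then
for every `α > 0` there is a dense subspace `X_α` of `X` such that
`n^α ‖T^n x - Px‖ → 0` for every `x ∈ X_α`. -/
theorem uncondRitt_polynomial_rates_on_dense_subspace
    {X : Type*} [NormedAddCommGroup X] [NormedSpace ℂ X] [CompleteSpace X]
    (T : X →L[ℂ] X) (hc0 : ¬ ContainsCopyOfC0 X) (hT : UncondRitt T)
    (P : X →L[ℂ] X) (hP : P.comp P = P)
    (hrange : LinearMap.range (P : X →ₗ[ℂ] X) = LinearMap.ker ((1 - T : X →L[ℂ] X) : X →ₗ[ℂ] X))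
    (hker : LinearMap.ker (P : X →ₗ[ℂ] X) = (LinearMap.range ((1 - T : X →L[ℂ] X) : X →ₗ[ℂ] X)).topologicalClosure) :
    ∀ α : ℝ, 0 < α → ∃ Xα : Submodule ℂ X, Dense (Xα : Set X) ∧
      ∀ x ∈ Xα, Tendsto (fun n : ℕ => (n : ℝ) ^ α * ‖(T ^ n) x - P x‖) atTop (𝓝 0) :=
  uncondRitt_polynomial_rates_on_dense_subspace_general T hT P hP hrange hker
end

section
/- Let X be a complex Hilbert space, let M₁, …, M_N (N ≥ 2) be closed subspaces of X, let P_k denote the orthogonal projection of X onto M_k, let M = M₁ ∩ … ∩ M_N with orthogonal projection P_M, and let T = P_N ⋯ P₁. Suppose ι ≥ 0 is a real number with 3ι² ≤ N³ such that for every n with 1 ≤ n ≤ N and every x ∈ M_n one has ∑_{k=1}^N dist(x, M_k)² ≥ ι² · dist(x, M)². Then for every x ∈ X and every n ≥ 0, ‖T^n x − P_M x‖ ≤ (1 − 3ι²/N³)^{n/2} · ‖x − P_M x‖. -/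
/-!
For `y ⊥ M` follow the partial products `u k = P_k ⋯ P_1 y`. By Pythagoras the loss
`‖y‖² - ‖T y‖²` is the sum of the squared steps `‖u k - u (k+1)‖²`. The first iterate `u 1`
lies in `M_1` and is still orthogonal to `M`, so the inclination bounds `ι² ‖u 1‖²` by
`∑ₖ dist(u 1, M_k)²`, and each `dist(u 1, M_k) ≤ ‖u 1 - u k‖` is controlled by the steps through
Cauchy–Schwarz. This gives `‖T y‖² ≤ (1 - 3ι²/N³) ‖y‖²` on `Mᗮ`; as `T` fixes `M` and preserves
`Mᗮ`, iterating yields the rate.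
-/

open Filter Topology

/-- The orthogonal projection onto a subspace, as an endomorphism. -/
noncomputable def projOnto {X : Type*} [NormedAddCommGroup X] [InnerProductSpace ℂ X]
    (K : Submodule ℂ X) [K.HasOrthogonalProjection] : X →L[ℂ] X :=
  K.subtypeL.comp K.orthogonalProjectionOnto

/-- The product `P_k ⋯ P_1` of the orthogonal projections onto the first `k` of the
subspaces `M 0, …, M (N-1)` (applied in order: first `P_1 = projOnto (M 0)`, etc.);
for `k = N` this is the operator `T = P_N ⋯ P_1` of the method of cyclic alternating
projections. -/
noncomputable def cycleProd {X : Type*} [NormedAddCommGroup X] [InnerProductSpace ℂ X]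
    {N : ℕ} (M : Fin N → Submodule ℂ X) [∀ i, CompleteSpace (M i)] (k : ℕ) :
    X →L[ℂ] X :=
  (((List.ofFn fun i => projOnto (M i)).take k).reverse).prod

open Metric Finset

theorem Submodule.infDist_eq_norm_sub_starProjection {𝕜 E : Type*} [RCLike 𝕜]
    [NormedAddCommGroup E] [InnerProductSpace 𝕜 E] (K : Submodule 𝕜 E)
    [K.HasOrthogonalProjection] (x : E) :
    infDist x K = ‖x - K.starProjection x‖ := by
  rw [infDist_eq_iInf, starProjection_minimal]
  simp only [dist_eq_norm]
  rfl

theorem dist_sq_le_mul_sum_dist_sq {α : Type*} [PseudoMetricSpace α] (u : ℕ → α) {m n : ℕ}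
    (hmn : m ≤ n) :
    dist (u m) (u n) ^ 2 ≤
      ((n - m : ℕ) : ℝ) * ∑ j ∈ Ico m n, dist (u j) (u (j + 1)) ^ 2 := by
  calc dist (u m) (u n) ^ 2 ≤ (∑ j ∈ Ico m n, dist (u j) (u (j + 1))) ^ 2 := by
        gcongr
        exact dist_le_Ico_sum_dist u hmn
    _ ≤ _ := by
        simpa only [Nat.card_Ico] using
          sq_sum_le_card_mul_sum_sq (s := Ico m n) (f := fun j => dist (u j) (u (j + 1)))

theorem sum_infDist_sq_le_mul_sum_dist_sq {α : Type*} [PseudoMetricSpace α] {N : ℕ}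
    (S : Fin N → Set α) (u : ℕ → α) (hu : ∀ k : Fin N, u (k.val + 1) ∈ S k) :
    ∑ k, infDist (u 1) (S k) ^ 2 ≤
      N * ((N - 1) * ∑ j ∈ Ico 1 N, dist (u j) (u (j + 1)) ^ 2) := by
  have hterm (k : Fin N) :
      infDist (u 1) (S k) ^ 2 ≤ (N - 1) * ∑ j ∈ Ico 1 N, dist (u j) (u (j + 1)) ^ 2 :=
    calc infDist (u 1) (S k) ^ 2 ≤ dist (u 1) (u (k.val + 1)) ^ 2 := by
          gcongr
          exacts [infDist_nonneg, infDist_le_dist_of_mem (hu k)]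
      _ ≤ ((k.val + 1 - 1 : ℕ) : ℝ) *
            ∑ j ∈ Ico 1 (k.val + 1), dist (u j) (u (j + 1)) ^ 2 :=
          dist_sq_le_mul_sum_dist_sq u (by omega)
      _ ≤ (N - 1) * ∑ j ∈ Ico 1 N, dist (u j) (u (j + 1)) ^ 2 := by
          have hk : ((k.val + 1 - 1 : ℕ) : ℝ) + 1 ≤ N := by exact_mod_cast (by omega)
          refine mul_le_mul (by linarith) ?_ (sum_nonneg fun _ _ => sq_nonneg _) (by linarith)
          exact sum_le_sum_of_subset_of_nonneg (Ico_subset_Ico_right k.isLt)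
            fun _ _ _ => sq_nonneg _
  simpa using sum_le_sum fun k (_ : k ∈ univ) => hterm k

theorem le_rpow_half_mul_of_sq_le {a b c : ℝ} (n : ℕ) (ha : 0 ≤ a) (hb : 0 ≤ b)
    (hc : 0 ≤ c) (h : a ^ 2 ≤ c ^ n * b ^ 2) : a ≤ c ^ ((n : ℝ) / 2) * b := by
  refine (pow_le_pow_iff_left₀ ha (by positivity) two_ne_zero).1 ?_
  rwa [mul_pow, ← Real.rpow_mul_natCast hc, Nat.cast_ofNat, div_mul_cancel₀ _ two_ne_zero,
    Real.rpow_natCast]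

-- For a projection `p`, the members are the operators fixing its range and preserving its kernel.
def absorbingSubmonoid {R : Type*} [Monoid R] (p : R) : Submonoid R where
  carrier := {a | a * p = p ∧ p * a = p}
  one_mem' := ⟨one_mul p, mul_one p⟩
  mul_mem' := fun {a b} ⟨ha, ha'⟩ ⟨hb, hb'⟩ =>
    ⟨by rw [mul_assoc, hb, ha], by rw [← mul_assoc, ha', hb']⟩

section Projections

variable {X : Type*} [NormedAddCommGroup X] [InnerProductSpace ℂ X]

theorem norm_sq_eq_norm_sq_projOnto_add_dist_sq (K : Submodule ℂ X) [K.HasOrthogonalProjection]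
    (x : X) : ‖x‖ ^ 2 = ‖projOnto K x‖ ^ 2 + dist x (projOnto K x) ^ 2 := by
  rw [K.norm_sq_eq_add_norm_sq_starProjection x, K.starProjection_orthogonal_val, dist_eq_norm]
  rfl

theorem projOnto_mem_absorbingSubmonoid {K U : Submodule ℂ X} [K.HasOrthogonalProjection]
    [U.HasOrthogonalProjection] (h : K ≤ U) :
    projOnto U ∈ absorbingSubmonoid (projOnto K) :=
  ⟨ContinuousLinearMap.ext fun x =>
      Submodule.starProjection_eq_self_iff.2 (h (K.starProjection_apply_mem x)),
    Submodule.starProjection_comp_starProjection_of_le h⟩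

end Projections

section CyclicProjections

variable {X : Type*} [NormedAddCommGroup X] [InnerProductSpace ℂ X]
  {N : ℕ} (M : Fin N → Submodule ℂ X) [∀ i, CompleteSpace (M i)]

theorem cycleProd_succ (k : Fin N) :
    cycleProd M (k.val + 1) = projOnto (M k) * cycleProd M k := by
  simp [cycleProd, List.take_add_one]

theorem cycleProd_mem_absorbingSubmonoid {K : Submodule ℂ X} [K.HasOrthogonalProjection]
    (hK : ∀ i, K ≤ M i) (k : ℕ) : cycleProd M k ∈ absorbingSubmonoid (projOnto K) := by
  refine Submonoid.list_prod_mem _ fun A hA => ?_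
  obtain ⟨i, rfl⟩ := List.mem_ofFn.1 (List.mem_of_mem_take (List.mem_reverse.1 hA))
  exact projOnto_mem_absorbingSubmonoid (hK i)

theorem norm_sq_cycleProd_le_of_projOnto_eq_zero (hN : 0 < N) {K : Submodule ℂ X}
    [K.HasOrthogonalProjection] (hK : ∀ i, K ≤ M i) {ι : ℝ}
    (hιN : 3 * ι ^ 2 ≤ (N : ℝ) ^ 3)
    (hincl : ∀ x ∈ M ⟨0, hN⟩, ι ^ 2 * infDist x K ^ 2 ≤ ∑ k, infDist x (M k) ^ 2)
    {y : X} (hy : projOnto K y = 0) :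
    ‖cycleProd M N y‖ ^ 2 ≤ (1 - 3 * ι ^ 2 / (N : ℝ) ^ 3) * ‖y‖ ^ 2 := by
  set u : ℕ → X := fun k => cycleProd M k y
  set e : ℕ → ℝ := fun j => dist (u j) (u (j + 1)) ^ 2
  have hstep (k : Fin N) : u (k.val + 1) = projOnto (M k) (u k) := by
    simp only [u, cycleProd_succ, mul_apply_eq_comp]
  have hpyth (k : Fin N) : ‖u k‖ ^ 2 = ‖u (k.val + 1)‖ ^ 2 + e k := by
    simpa only [← hstep] using norm_sq_eq_norm_sq_projOnto_add_dist_sq (M k) (u k)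
  have hu0 : u 0 = y := by simp [u, cycleProd]
  have hloss : ‖y‖ ^ 2 - ‖u N‖ ^ 2 = ∑ j ∈ range N, e j := by
    rw [← hu0, ← sum_range_sub' (fun j => ‖u j‖ ^ 2)]
    refine sum_congr rfl fun j hj => ?_
    rw [hpyth ⟨j, mem_range.1 hj⟩]; ring
  have hu1 : infDist (u 1) K = ‖u 1‖ := by
    have : projOnto K (u 1) = 0 := by
      rw [← mul_apply_eq_comp, (cycleProd_mem_absorbingSubmonoid M hK 1).2, hy]
    rw [K.infDist_eq_norm_sub_starProjection, show K.starProjection (u 1) = 0 from this,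
      sub_zero]
  have hcross : ι ^ 2 * ‖u 1‖ ^ 2 ≤ N * ((N - 1) * ∑ j ∈ Ico 1 N, e j) := by
    rw [← hu1]
    refine (hincl _ ?_).trans
      (sum_infDist_sq_le_mul_sum_dist_sq (fun k => (M k : Set X)) u fun k => ?_)
    · rw [hstep ⟨0, hN⟩]; exact (M _).starProjection_apply_mem _
    · rw [hstep]; exact (M k).starProjection_apply_mem _
  have hfirst : ‖y‖ ^ 2 = ‖u 1‖ ^ 2 + e 0 := hpyth ⟨0, hN⟩
  rw [sum_range_eq_add_Ico _ hN] at hloss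
  have hN1 : (1 : ℝ) ≤ N := by exact_mod_cast hN
  have hcoef : 3 * (N * (N - 1)) ≤ (N : ℝ) ^ 3 := by nlinarith [sq_nonneg ((N : ℝ) - 3 / 2)]
  have hE : 0 ≤ ∑ j ∈ Ico 1 N, e j := sum_nonneg fun _ _ => sq_nonneg _
  -- `3ι²‖y‖² = 3ι²(‖u 1‖² + e 0) ≤ 3N(N-1) ∑_{j ≥ 1} e j + N³ e 0 ≤ N³ (‖y‖² - ‖u N‖²)`
  rw [sub_mul, one_mul, div_mul_eq_mul_div, le_sub_iff_add_le, ← le_sub_iff_add_le',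
    div_le_iff₀ (by positivity)]
  nlinarith [sq_nonneg (dist (u 0) (u 1))]

end CyclicProjections

theorem alternatingProjections_rate_of_inner_l2_inclination_general
    {X : Type*} [NormedAddCommGroup X] [InnerProductSpace ℂ X]
    {N : ℕ} (hN : 2 ≤ N) (M : Fin N → Submodule ℂ X) [∀ i, CompleteSpace (M i)]
    [CompleteSpace (⨅ i, M i : Submodule ℂ X)]
    (ι : ℝ) (hιN : 3 * ι ^ 2 ≤ (N : ℝ) ^ 3)
    (hincl : ∀ n : Fin N, ∀ x ∈ M n,
      ι ^ 2 * Metric.infDist x ((⨅ i, M i : Submodule ℂ X) : Set X) ^ 2 ≤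
        ∑ k : Fin N, Metric.infDist x ((M k : Submodule ℂ X) : Set X) ^ 2) :
    ∀ x : X, ∀ n : ℕ,
      ‖((cycleProd M N) ^ n) x - (projOnto (⨅ i, M i)) x‖ ≤
        (1 - 3 * ι ^ 2 / (N : ℝ) ^ 3) ^ ((n : ℝ) / 2) *
          ‖x - (projOnto (⨅ i, M i)) x‖ := by
  intro x n
  set T := cycleProd M N
  set P := projOnto (⨅ i, M i)
  set c := 1 - 3 * ι ^ 2 / (N : ℝ) ^ 3
  have hc : 0 ≤ c := sub_nonneg.2 (div_le_one_of_le₀ hιN (by positivity))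
  have hT (m : ℕ) : T ^ m ∈ absorbingSubmonoid P :=
    pow_mem (cycleProd_mem_absorbingSubmonoid M (iInf_le M) N) m
  have hy : P (x - P x) = 0 :=
    (Submodule.starProjection_apply_eq_zero_iff _).2
      (Submodule.sub_starProjection_mem_orthogonal x)
  have hgeom : ‖(T ^ n) (x - P x)‖ ^ 2 ≤ c ^ n * ‖x - P x‖ ^ 2 := by
    refine le_geom (u := fun m => ‖(T ^ m) (x - P x)‖ ^ 2) hc n fun m _ => ?_
    rw [pow_succ' T m, mul_apply_eq_comp]
    refine norm_sq_cycleProd_le_of_projOnto_eq_zero M (by omega) (iInf_le M) hιN (hincl _) ?_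
    rw [← mul_apply_eq_comp, (hT m).2, hy]
  calc ‖(T ^ n) x - P x‖ = ‖(T ^ n) (x - P x)‖ := by
        rw [map_sub, ← mul_apply_eq_comp (T ^ n), (hT n).1]
    _ ≤ c ^ ((n : ℝ) / 2) * ‖x - P x‖ :=
        le_rpow_half_mul_of_sq_le n (norm_nonneg _) (norm_nonneg _) hc hgeom

/-- **Rate of convergence in terms of the inner ℓ²-inclination.** If `ι ≥ 0` with
`3ι² ≤ N³` satisfies `∑_k dist(x, M_k)² ≥ ι² dist(x, M)²` for every `x` in any of
the subspaces `M_n`, then `‖Tⁿx - P_M x‖ ≤ (1 - 3ι²/N³)^{n/2} ‖x - P_M x‖`. -/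
theorem alternatingProjections_rate_of_inner_l2_inclination
    {X : Type*} [NormedAddCommGroup X] [InnerProductSpace ℂ X] [CompleteSpace X]
    {N : ℕ} (hN : 2 ≤ N) (M : Fin N → Submodule ℂ X) [∀ i, CompleteSpace (M i)]
    [CompleteSpace (⨅ i, M i : Submodule ℂ X)]
    (ι : ℝ) (hι0 : 0 ≤ ι) (hιN : 3 * ι ^ 2 ≤ (N : ℝ) ^ 3)
    (hincl : ∀ n : Fin N, ∀ x ∈ M n,
      ι ^ 2 * Metric.infDist x ((⨅ i, M i : Submodule ℂ X) : Set X) ^ 2 ≤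
        ∑ k : Fin N, Metric.infDist x ((M k : Submodule ℂ X) : Set X) ^ 2) :
    ∀ x : X, ∀ n : ℕ,
      ‖((cycleProd M N) ^ n) x - (projOnto (⨅ i, M i)) x‖ ≤
        (1 - 3 * ι ^ 2 / (N : ℝ) ^ 3) ^ ((n : ℝ) / 2) *
          ‖x - (projOnto (⨅ i, M i)) x‖ :=
  alternatingProjections_rate_of_inner_l2_inclination_general hN M ι hιN hincl
end

section
/- Let X be a complex Hilbert space, let M₁, …, M_N (N ≥ 2) be closed subspaces of X, let P_k denote the orthogonal projection of X onto M_k, let M = M₁ ∩ … ∩ M_N with orthogonal projection P_M, and let T = P_N ⋯ P₁. Then for every real number α > 0 there exists a dense linear subspace X_α of X such that for all x ∈ X_α one has n^α · ‖T^n x − P_M x‖ → 0 as n → ∞. -/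
/-!
`T` is a contraction with `‖x - T x‖² ≤ N (‖x‖² - ‖T x‖²)`: split `x - T x` into the `N`
single-projection steps, apply Cauchy–Schwarz and Pythagoras to each. Summing this inequality
along an orbit telescopes, and since `‖Tʲ (x - T x)‖` decreases in `j` it gives
`‖Tⁿ (1 - T)‖ ≤ √(N / (n + 1))`; splitting `n` into `m` blocks then yields
`‖Tⁿ (1 - T)ᵐ‖ = O(n^(-m/2))`. For `m > 2α` take `X_α = M ⊕ ran (1 - T)ᵐ`: on `M` the error
`Tⁿ x - P_M x` vanishes, and on `ran (1 - T)ᵐ` it is `Tⁿ (1 - T)ᵐ z`, because the range of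
`1 - T` is orthogonal to the fixed space `M` of the contraction `T`. A vector orthogonal to
`X_α` is killed by `(1 - T*)ᵐ`, hence (by the same orthogonality for `T*`) fixed by `T*`, so by
`T`; it then lies in `M` and is orthogonal to `M`, i.e. it is zero.
-/

open Filter Topology
open scoped InnerProductSpace InnerProduct

lemma tendsto_rpow_mul_div_pow_atTop {α : ℝ} {p : ℕ} (hp : α < p) (c : ℝ) :
    Tendsto (fun n : ℕ => (n : ℝ) ^ α * (c / n) ^ p) atTop (𝓝 0) := by
  have hlim : Tendsto (fun n : ℕ => c ^ p * (n : ℝ) ^ (-(p - α))) atTop (𝓝 0) := by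
    simpa using ((tendsto_rpow_neg_atTop (sub_pos.2 hp)).comp
      tendsto_natCast_atTop_atTop).const_mul (c ^ p)
  refine hlim.congr' ((eventually_gt_atTop 0).mono fun n hn => ?_)
  have hn' : (0 : ℝ) < n := Nat.cast_pos.2 hn
  simp only [neg_sub, Real.rpow_sub hn', Real.rpow_natCast, div_pow]
  ring

section NormedRing

variable {R : Type*} [NormedRing R] {a : R}

lemma norm_pow_mul_le_of_norm_le_one (ha : ‖a‖ ≤ 1) (k : ℕ) (b : R) :
    ‖a ^ k * b‖ ≤ ‖b‖ := by
  induction k with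
  | zero => simp
  | succ k ih =>
    calc ‖a ^ (k + 1) * b‖ = ‖a * (a ^ k * b)‖ := by rw [pow_succ', mul_assoc]
      _ ≤ ‖a‖ * ‖a ^ k * b‖ := norm_mul_le _ _
      _ ≤ 1 * ‖b‖ := by gcongr
      _ = ‖b‖ := one_mul _

lemma norm_pow_mul_one_sub_pow_le (ha : ‖a‖ ≤ 1) {m : ℕ} (hm : 0 < m) (n : ℕ) :
    ‖a ^ n * (1 - a) ^ m‖ ≤ ‖a ^ (n / m) * (1 - a)‖ ^ m := by
  have hcomm : Commute (a ^ (n / m)) (1 - a) :=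
    (Commute.one_right _).sub_right (Commute.self_pow a _).symm
  have hsplit : a ^ n * (1 - a) ^ m = a ^ (n % m) * (a ^ (n / m) * (1 - a)) ^ m := by
    rw [hcomm.mul_pow, ← pow_mul, ← mul_assoc, ← pow_add, Nat.mod_add_div' n m]
  rw [hsplit]
  exact (norm_pow_mul_le_of_norm_le_one ha _ _).trans (norm_pow_le' _ hm)

lemma norm_pow_mul_one_sub_pow_le_div {κ : ℝ} (ha : ‖a‖ ≤ 1)
    (hsq : ∀ q : ℕ, ‖a ^ q * (1 - a)‖ ^ 2 ≤ κ / (q + 1))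
    {p : ℕ} (hp : 0 < p) {n : ℕ} (hn : 0 < n) :
    ‖a ^ n * (1 - a) ^ (2 * p)‖ ≤ (2 * p * κ / n) ^ p := by
  have hκ : 0 ≤ κ := by simpa using (sq_nonneg _).trans (hsq 0)
  have hqn : (n : ℝ) ≤ 2 * p * (n / (2 * p) + 1 : ℕ) := by
    have := Nat.lt_div_mul_add (a := n) (show 0 < 2 * p by omega)
    exact_mod_cast (by linarith : n ≤ 2 * p * (n / (2 * p) + 1))
  calc ‖a ^ n * (1 - a) ^ (2 * p)‖ ≤ (‖a ^ (n / (2 * p)) * (1 - a)‖ ^ 2) ^ p := by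
        rw [← pow_mul]; exact norm_pow_mul_one_sub_pow_le ha (by omega) n
    _ ≤ (κ / (n / (2 * p) + 1 : ℕ)) ^ p := by gcongr; exact_mod_cast hsq _
    _ ≤ (2 * p * κ / n) ^ p := by
        refine pow_le_pow_left₀ (by positivity) ?_ p
        rw [div_le_div_iff₀ (by positivity) (by positivity)]
        nlinarith

lemma tendsto_rpow_mul_norm_pow_mul_one_sub_pow {κ : ℝ} (ha : ‖a‖ ≤ 1)
    (hsq : ∀ q : ℕ, ‖a ^ q * (1 - a)‖ ^ 2 ≤ κ / (q + 1))
    {α : ℝ} {p : ℕ} (hp₀ : 0 < p) (hp : α < p) :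
    Tendsto (fun n : ℕ => (n : ℝ) ^ α * ‖a ^ n * (1 - a) ^ (2 * p)‖) atTop (𝓝 0) :=
  squeeze_zero' (Eventually.of_forall fun n => by positivity)
    ((eventually_gt_atTop 0).mono fun n hn => by
      gcongr; exact norm_pow_mul_one_sub_pow_le_div ha hsq hp₀ hn)
    (tendsto_rpow_mul_div_pow_atTop hp (2 * p * κ))

end NormedRing

namespace ContinuousLinearMap

section NormedSpace

variable {𝕜 E : Type*} [NontriviallyNormedField 𝕜] [NormedAddCommGroup E] [NormedSpace 𝕜 E]
  {C : E →L[𝕜] E}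

lemma norm_pow_apply_le (hC : ‖C‖ ≤ 1) (k : ℕ) (x : E) : ‖(C ^ k) x‖ ≤ ‖x‖ := by
  induction k with
  | zero => simp
  | succ k ih =>
    rw [pow_succ', mul_apply_eq_comp]
    exact (C.le_of_opNorm_le hC _).trans (by simpa using ih)

variable {κ : ℝ}

lemma succ_mul_norm_pow_apply_sub_sq_le (hC : ‖C‖ ≤ 1) (hκ : 0 ≤ κ)
    (hR : ∀ x, ‖x - C x‖ ^ 2 ≤ κ * (‖x‖ ^ 2 - ‖C x‖ ^ 2)) (n : ℕ) (x : E) :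
    (n + 1) * ‖(C ^ n) (x - C x)‖ ^ 2 ≤ κ * ‖x‖ ^ 2 := by
  have hpow : ∀ j, (C ^ (j + 1)) x = C ((C ^ j) x) := fun j => by
    rw [pow_succ', mul_apply_eq_comp]
  have hcomm : ∀ j, (C ^ j) (C x) = C ((C ^ j) x) := fun j => by
    rw [← hpow, pow_succ, mul_apply_eq_comp]
  have hanti : ∀ j ≤ n, ‖(C ^ n) (x - C x)‖ ≤ ‖(C ^ j) (x - C x)‖ := fun j hj => by
    rw [← Nat.sub_add_cancel hj, pow_add, mul_apply_eq_comp]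
    exact norm_pow_apply_le hC _ _
  calc (n + 1) * ‖(C ^ n) (x - C x)‖ ^ 2
      ≤ ∑ j ∈ Finset.range (n + 1), ‖(C ^ j) (x - C x)‖ ^ 2 := by
        simpa using Finset.card_nsmul_le_sum (Finset.range (n + 1)) _ _ fun j hj =>
          pow_le_pow_left₀ (norm_nonneg _) (hanti j (Nat.lt_succ_iff.1 (Finset.mem_range.1 hj))) 2
    _ ≤ ∑ j ∈ Finset.range (n + 1), κ * (‖(C ^ j) x‖ ^ 2 - ‖(C ^ (j + 1)) x‖ ^ 2) :=
        Finset.sum_le_sum fun j _ => by rw [map_sub, hcomm, hpow]; exact hR _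
    _ = κ * (‖x‖ ^ 2 - ‖(C ^ (n + 1)) x‖ ^ 2) := by
        rw [← Finset.mul_sum, Finset.sum_range_sub' (fun j => ‖(C ^ j) x‖ ^ 2)]; simp
    _ ≤ κ * ‖x‖ ^ 2 := by gcongr; nlinarith [sq_nonneg ‖(C ^ (n + 1)) x‖]

lemma norm_pow_mul_one_sub_sq_le (hC : ‖C‖ ≤ 1) (hκ : 0 ≤ κ)
    (hR : ∀ x, ‖x - C x‖ ^ 2 ≤ κ * (‖x‖ ^ 2 - ‖C x‖ ^ 2)) (n : ℕ) :
    ‖C ^ n * (1 - C)‖ ^ 2 ≤ κ / (n + 1) := by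
  have ht : 0 ≤ κ / (n + 1) := by positivity
  have hle : ‖C ^ n * (1 - C)‖ ≤ √(κ / (n + 1)) := by
    refine ContinuousLinearMap.opNorm_le_bound _ (Real.sqrt_nonneg _) fun x => ?_
    have hx := succ_mul_norm_pow_apply_sub_sq_le hC hκ hR n x
    rw [← Real.sqrt_sq (norm_nonneg _), ← Real.sqrt_sq (norm_nonneg x), ← Real.sqrt_mul ht]
    refine Real.sqrt_le_sqrt ?_
    rw [div_mul_eq_mul_div, le_div_iff₀ (by positivity)]
    simpa [mul_comm] using hx
  exact (pow_le_pow_left₀ (norm_nonneg _) hle 2).trans (Real.sq_sqrt ht).le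

end NormedSpace

section Hilbert

variable {𝕜 E : Type*} [RCLike 𝕜] [NormedAddCommGroup E] [InnerProductSpace 𝕜 E]
  [CompleteSpace E]
  {C : E →L[𝕜] E}

lemma adjoint_apply_eq_self_of_apply_eq_self (hC : ‖C‖ ≤ 1) {v : E} (hv : C v = v) :
    (C†) v = v := by
  refine eq_of_norm_le_re_inner_eq_norm_sq (𝕜 := 𝕜) ?_ ?_
  · simpa using (C†).le_of_opNorm_le ((adjoint.norm_map C).trans_le hC) v
  · rw [adjoint_inner_left, hv, inner_self_eq_norm_sq]

lemma inner_sub_apply_eq_zero_of_apply_eq_self (hC : ‖C‖ ≤ 1) {w : E} (hw : C w = w) (z : E) :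
    ⟪w, z - C z⟫_𝕜 = 0 := by
  rw [inner_sub_right, ← adjoint_inner_left, adjoint_apply_eq_self_of_apply_eq_self hC hw,
    sub_self]

lemma apply_eq_self_of_one_sub_pow_apply_eq_zero (hC : ‖C‖ ≤ 1) {m : ℕ} {v : E}
    (hv : ((1 - C) ^ m) v = 0) : C v = v := by
  induction m generalizing v with
  | zero => simp_all
  | succ m ih =>
    -- `v - C v` is fixed by `C` and lies in the range of `1 - C`, which is orthogonal to
    -- the fixed points
    rw [pow_succ, mul_apply_eq_comp] at hv
    have hfix := ih hv
    simp only [sub_apply, one_apply_eq_self] at hfix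
    have := inner_sub_apply_eq_zero_of_apply_eq_self hC hfix v
    rw [inner_self_eq_zero, sub_eq_zero] at this
    exact this.symm

lemma starProjection_one_sub_pow_apply {K : Submodule 𝕜 E} [K.HasOrthogonalProjection]
    (hC : ‖C‖ ≤ 1) (hK : ∀ v, v ∈ K ↔ C v = v) {m : ℕ} (hm : 0 < m) (z : E) :
    K.starProjection (((1 - C) ^ m) z) = 0 := by
  obtain ⟨k, rfl⟩ := Nat.exists_eq_add_of_lt hm
  rw [Submodule.starProjection_apply_eq_zero_iff, pow_succ', zero_add, mul_apply_eq_comp]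
  exact fun w hw => by
    simpa using inner_sub_apply_eq_zero_of_apply_eq_self hC ((hK w).1 hw) (((1 - C) ^ k) z)

lemma dense_sup_range_one_sub_pow {K : Submodule 𝕜 E} (hC : ‖C‖ ≤ 1)
    (hK : ∀ v, v ∈ K ↔ C v = v) (m : ℕ) :
    Dense ((K ⊔ ((1 - C) ^ m).range : Submodule 𝕜 E) : Set E) := by
  rw [Submodule.dense_iff_topologicalClosure_eq_top, Submodule.topologicalClosure_eq_top_iff,
    ← Submodule.inf_orthogonal, Submodule.eq_bot_iff]
  rintro v ⟨hvK, hvR⟩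
  have hC' : ‖C†‖ ≤ 1 := (adjoint.norm_map C).trans_le hC
  have hadj : ((1 - C†) ^ m) v = 0 := by
    have := (orthogonal_range ((1 - C) ^ m)).le hvR
    simpa only [LinearMap.mem_ker, coe_coe, ← star_eq_adjoint, star_pow, star_sub, star_one]
      using this
  have hfix : C v = v := by
    simpa using adjoint_apply_eq_self_of_apply_eq_self hC'
      (apply_eq_self_of_one_sub_pow_apply_eq_zero hC' hadj)
  exact inner_self_eq_zero.1 (hvK v ((hK v).2 hfix))

theorem exists_dense_tendsto_rpow_mul_norm_pow_apply_sub_starProjection {K : Submodule 𝕜 E}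
    [K.HasOrthogonalProjection] {κ : ℝ} (hC : ‖C‖ ≤ 1) (hκ : 0 ≤ κ)
    (hR : ∀ x, ‖x - C x‖ ^ 2 ≤ κ * (‖x‖ ^ 2 - ‖C x‖ ^ 2)) (hK : ∀ v, v ∈ K ↔ C v = v) (α : ℝ) :
    ∃ Xα : Submodule 𝕜 E, Dense (Xα : Set E) ∧ ∀ x ∈ Xα,
      Tendsto (fun n : ℕ => (n : ℝ) ^ α * ‖(C ^ n) x - K.starProjection x‖) atTop (𝓝 0) := by
  set m := 2 * (⌊α⌋₊ + 1)
  refine ⟨K ⊔ ((1 - C) ^ m).range, dense_sup_range_one_sub_pow hC hK m, fun x hx => ?_⟩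
  obtain ⟨u, hu, _, ⟨z, rfl⟩, rfl⟩ := Submodule.mem_sup.1 hx
  simp only [coe_coe]
  have herr : ∀ n, (C ^ n) (u + ((1 - C) ^ m) z) - K.starProjection (u + ((1 - C) ^ m) z)
      = (C ^ n * (1 - C) ^ m) z := fun n => by
    have hfix : (C ^ n) u = u := by
      rw [FunLike.coe_pow_eq_iterate]; exact Function.iterate_fixed ((hK u).1 hu) n
    rw [map_add, map_add, starProjection_one_sub_pow_apply hC hK (by omega),
      K.starProjection_eq_self_iff.2 hu, hfix, mul_apply_eq_comp]
    abel
  have hlim := (tendsto_rpow_mul_norm_pow_mul_one_sub_pow hC (norm_pow_mul_one_sub_sq_le hC hκ hR)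
    (p := ⌊α⌋₊ + 1) (Nat.succ_pos _) (mod_cast Nat.lt_floor_add_one α)).mul_const ‖z‖
  rw [zero_mul] at hlim
  refine squeeze_zero (fun n => by positivity) (fun n => ?_) hlim
  rw [herr, mul_assoc]
  gcongr
  exact le_opNorm _ _

end Hilbert

end ContinuousLinearMap

lemma norm_sub_sq_le_add_mul {E : Type*} [SeminormedAddCommGroup E] {x y z : E} {k l : ℝ}
    (hk : 0 ≤ k) (hl : 0 ≤ l) (hyx : ‖y‖ ≤ ‖x‖) (hzy : ‖z‖ ≤ ‖y‖)
    (hxy : ‖x - y‖ ^ 2 ≤ k * (‖x‖ ^ 2 - ‖y‖ ^ 2))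
    (hyz : ‖y - z‖ ^ 2 ≤ l * (‖y‖ ^ 2 - ‖z‖ ^ 2)) :
    ‖x - z‖ ^ 2 ≤ (k + l) * (‖x‖ ^ 2 - ‖z‖ ^ 2) := by
  set a := ‖x - y‖
  set b := ‖y - z‖
  have hD₁ : 0 ≤ ‖x‖ ^ 2 - ‖y‖ ^ 2 := by nlinarith [norm_nonneg y]
  have hD₂ : 0 ≤ ‖y‖ ^ 2 - ‖z‖ ^ 2 := by nlinarith [norm_nonneg z]
  -- `(2ab)² ≤ 4 k l D₁ D₂ ≤ (l D₁ + k D₂)²`, where `Dᵢ` are the differences of squared norms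
  have hab : 2 * a * b ≤ l * (‖x‖ ^ 2 - ‖y‖ ^ 2) + k * (‖y‖ ^ 2 - ‖z‖ ^ 2) := by
    nlinarith [sq_nonneg (l * (‖x‖ ^ 2 - ‖y‖ ^ 2) - k * (‖y‖ ^ 2 - ‖z‖ ^ 2)),
      mul_le_mul hxy hyz (sq_nonneg _) (mul_nonneg hk hD₁), norm_nonneg (x - y),
      norm_nonneg (y - z), mul_nonneg hl hD₁, mul_nonneg hk hD₂]
  have htri : ‖x - z‖ ≤ a + b := norm_sub_le_norm_sub_add_norm_sub x y z
  nlinarith [norm_nonneg (x - z)]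

section CycleProd

variable {X : Type*} [NormedAddCommGroup X] [InnerProductSpace ℂ X] {N : ℕ}
  (M : Fin N → Submodule ℂ X) [∀ i, CompleteSpace (M i)]

lemma cycleProd_zero : cycleProd M 0 = 1 := by
  simp [cycleProd]

lemma cycleProd_succ_of_lt {k : ℕ} (hk : k < N) :
    cycleProd M (k + 1) = (M ⟨k, hk⟩).starProjection * cycleProd M k := by
  simp [cycleProd, List.take_add_one, hk, projOnto, Submodule.starProjection]

lemma cycleProd_succ_of_le {k : ℕ} (hk : N ≤ k) : cycleProd M (k + 1) = cycleProd M k := by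
  unfold cycleProd
  rw [List.take_of_length_le (by simp; omega), List.take_of_length_le (by simpa using hk)]

lemma antitone_norm_cycleProd_apply (x : X) : Antitone fun k => ‖cycleProd M k x‖ := by
  refine antitone_nat_of_succ_le fun k => ?_
  rcases lt_or_ge k N with hk | hk
  · rw [cycleProd_succ_of_lt M hk, mul_apply_eq_comp]
    exact Submodule.norm_starProjection_apply_le _ _
  · rw [cycleProd_succ_of_le M hk]

lemma norm_cycleProd_le_one (k : ℕ) : ‖cycleProd M k‖ ≤ 1 :=
  ContinuousLinearMap.opNorm_le_bound _ zero_le_one fun x => by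
    simpa [cycleProd_zero] using antitone_norm_cycleProd_apply M x (Nat.zero_le k)

lemma norm_sub_cycleProd_apply_sq_le {k : ℕ} (hk : k ≤ N) (x : X) :
    ‖x - cycleProd M k x‖ ^ 2 ≤ k * (‖x‖ ^ 2 - ‖cycleProd M k x‖ ^ 2) := by
  induction k with
  | zero => simp [cycleProd_zero]
  | succ k ih =>
    have hpyth (y : X) : ‖y - (M ⟨k, hk⟩).starProjection y‖ ^ 2
        = 1 * (‖y‖ ^ 2 - ‖(M ⟨k, hk⟩).starProjection y‖ ^ 2) := by
      rw [one_mul, (M ⟨k, hk⟩).norm_sq_eq_add_norm_sq_starProjection y,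
        Submodule.starProjection_orthogonal_val]
      ring
    rw [cycleProd_succ_of_lt M hk, mul_apply_eq_comp]
    push_cast
    exact norm_sub_sq_le_add_mul k.cast_nonneg zero_le_one
      (antitone_norm_cycleProd_apply M x (Nat.zero_le k) |>.trans_eq' (by simp))
      (Submodule.norm_starProjection_apply_le _ _) (ih (by omega)) (hpyth _).le

lemma cycleProd_apply_eq_self_of_mem {v : X} (hv : v ∈ ⨅ i, M i) (k : ℕ) :
    cycleProd M k v = v := by
  induction k with
  | zero => simp [cycleProd_zero]
  | succ k ih =>
    rcases lt_or_ge k N with hk | hk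
    · rw [cycleProd_succ_of_lt M hk, mul_apply_eq_comp, ih,
        Submodule.starProjection_eq_self_iff.2 (Submodule.mem_iInf _ |>.1 hv _)]
    · rw [cycleProd_succ_of_le M hk, ih]

lemma mem_iInf_of_cycleProd_apply_eq_self {v : X} (hv : cycleProd M N v = v) :
    v ∈ ⨅ i, M i := by
  have hfix (k : ℕ) (hk : k ≤ N) : cycleProd M k v = v := by
    have hnorm : ‖cycleProd M k v‖ = ‖v‖ := le_antisymm
      (by simpa [cycleProd_zero] using antitone_norm_cycleProd_apply M v (Nat.zero_le k))
      (by simpa [hv] using antitone_norm_cycleProd_apply M v hk)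
    have h := norm_sub_cycleProd_apply_sq_le M hk v
    rw [hnorm, sub_self, mul_zero] at h
    exact (sub_eq_zero.1 (norm_eq_zero.1 (pow_eq_zero_iff two_ne_zero |>.1
      (le_antisymm h (sq_nonneg _))))).symm
  refine Submodule.mem_iInf _ |>.2 fun i => ?_
  have h := hfix (i + 1) i.isLt
  rw [cycleProd_succ_of_lt M i.isLt, mul_apply_eq_comp, hfix i i.isLt.le] at h
  rw [← h]
  exact Submodule.starProjection_apply_mem _ _

end CycleProd

theorem alternatingProjections_polynomial_rates_on_dense_subspace_general
    {X : Type*} [NormedAddCommGroup X] [InnerProductSpace ℂ X] [CompleteSpace X]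
    {N : ℕ} (M : Fin N → Submodule ℂ X) [∀ i, CompleteSpace (M i)]
    [CompleteSpace (⨅ i, M i : Submodule ℂ X)] :
    ∀ α : ℝ, 0 < α → ∃ Xα : Submodule ℂ X, Dense (Xα : Set X) ∧
      ∀ x ∈ Xα,
        Tendsto
          (fun n : ℕ =>
            (n : ℝ) ^ α * ‖((cycleProd M N) ^ n) x - (projOnto (⨅ i, M i)) x‖)
          atTop (𝓝 0) := fun α _ =>
  ContinuousLinearMap.exists_dense_tendsto_rpow_mul_norm_pow_apply_sub_starProjection
    (norm_cycleProd_le_one M N) N.cast_nonneg (norm_sub_cycleProd_apply_sq_le M le_rfl)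
    (fun _ => ⟨fun hv => cycleProd_apply_eq_self_of_mem M hv N,
      mem_iInf_of_cycleProd_apply_eq_self M⟩) α

/-- **Polynomial rates of convergence on dense subspaces for alternating projections.**
For every `α > 0` there is a dense subspace `X_α` of `X` such that
`n^α ‖Tⁿx - P_M x‖ → 0` for every `x ∈ X_α`, where `T = P_N ⋯ P_1`. -/
theorem alternatingProjections_polynomial_rates_on_dense_subspace
    {X : Type*} [NormedAddCommGroup X] [InnerProductSpace ℂ X] [CompleteSpace X]
    {N : ℕ} (hN : 2 ≤ N) (M : Fin N → Submodule ℂ X) [∀ i, CompleteSpace (M i)]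
    [CompleteSpace (⨅ i, M i : Submodule ℂ X)] :
    ∀ α : ℝ, 0 < α → ∃ Xα : Submodule ℂ X, Dense (Xα : Set X) ∧
      ∀ x ∈ Xα,
        Tendsto
          (fun n : ℕ =>
            (n : ℝ) ^ α * ‖((cycleProd M N) ^ n) x - (projOnto (⨅ i, M i)) x‖)
          atTop (𝓝 0) :=
  alternatingProjections_polynomial_rates_on_dense_subspace_general M
end

section
/- Let X be a complex Hilbert space and let M₁, M₂ be closed subspaces of X with M₁ ∩ M₂ = {0} and M₁^⊥ ∩ M₂^⊥ = {0}. Let P₁, P₂ denote the orthogonal projections onto M₁, M₂, and let T = P₂P₁. If (I − P₂)(M₁^⊥) is contained in the range of I − T, i.e., for every x ∈ X there exists y ∈ X with (I − P₂)((I − P₁)x − P₁y) = (I − P₁)y, then M₁ + M₂ = X (in particular M₁ + M₂ is closed). -/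
open Filter Topology

/-!
For `u = (I - P₁)x - P₁y`, the hypothesis says `(I - P₂)u = (I - P₁)y`. This vector lies in
both `M₂ᗮ` and `M₁ᗮ`, hence vanishes, so `u ∈ M₂` and `x = P₁(x + y) + u ∈ M₁ + M₂`.
-/

section

variable {X : Type*} [NormedAddCommGroup X] [InnerProductSpace ℂ X]

theorem projOnto_eq_starProjection (K : Submodule ℂ X) [K.HasOrthogonalProjection] :
    projOnto K = K.starProjection :=
  rfl

theorem mem_of_sub_projOnto_mem_orthogonal {K L : Submodule ℂ X} [L.HasOrthogonalProjection]
    (hKL : Kᗮ ⊓ Lᗮ = ⊥) {u : X} (hu : u - projOnto L u ∈ Kᗮ) : u ∈ L := by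
  have hzero : u - projOnto L u = 0 := by
    rw [← Submodule.mem_bot ℂ, ← hKL]
    exact ⟨hu, L.sub_starProjection_mem_orthogonal u⟩
  rw [← L.starProjection_eq_self_iff, ← projOnto_eq_starProjection]
  exact (sub_eq_zero.mp hzero).symm

end

theorem two_subspaces_sum_eq_top_general
    {X : Type*} [NormedAddCommGroup X] [InnerProductSpace ℂ X]
    (M₁ M₂ : Submodule ℂ X) [CompleteSpace M₁] [CompleteSpace M₂]
    (h2 : M₁ᗮ ⊓ M₂ᗮ = ⊥)
    (h : ∀ x : X, ∃ y : X,
      ((x - projOnto M₁ x) - projOnto M₁ y) -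
          projOnto M₂ ((x - projOnto M₁ x) - projOnto M₁ y) =
        y - projOnto M₁ y) :
    M₁ ⊔ M₂ = ⊤ := by
  refine eq_top_iff.2 fun x _ => ?_
  obtain ⟨y, hy⟩ := h x
  set u := (x - projOnto M₁ x) - projOnto M₁ y
  have hu : u ∈ M₂ := by
    refine mem_of_sub_projOnto_mem_orthogonal h2 ?_
    rw [hy]
    exact M₁.sub_starProjection_mem_orthogonal y
  have hx : x = (projOnto M₁ x + projOnto M₁ y) + u := by
    simp only [u]
    abel
  rw [hx]
  exact Submodule.add_mem_sup
    (M₁.add_mem (M₁.starProjection_apply_mem x) (M₁.starProjection_apply_mem y)) hu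

/-- **A two-subspace rigidity statement.** If `M₁ ∩ M₂ = {0}`, `M₁^⊥ ∩ M₂^⊥ = {0}` and
`(I - P₂)(M₁^⊥) ⊆ Ran(I - T)` for `T = P₂ P₁`, i.e. for every `x` there is `y` with
`(I - P₂)((I - P₁)x - P₁ y) = (I - P₁) y`, then `M₁ + M₂ = X`. -/
theorem two_subspaces_sum_eq_top
    {X : Type*} [NormedAddCommGroup X] [InnerProductSpace ℂ X] [CompleteSpace X]
    (M₁ M₂ : Submodule ℂ X) [CompleteSpace M₁] [CompleteSpace M₂]
    (h1 : M₁ ⊓ M₂ = ⊥) (h2 : M₁ᗮ ⊓ M₂ᗮ = ⊥)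
    (h : ∀ x : X, ∃ y : X,
      ((x - projOnto M₁ x) - projOnto M₁ y) -
          projOnto M₂ ((x - projOnto M₁ x) - projOnto M₁ y) =
        y - projOnto M₁ y) :
    M₁ ⊔ M₂ = ⊤ :=
  two_subspaces_sum_eq_top_general M₁ M₂ h2 h
end
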